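/- arXiv:1205.6830 — 2 statements merged into one kernel-verified Lean document; each statement's English description precedes it below -/
import Mathlib

section
/- Consider ℓ¹(ℤ) with convolution, involution (f*)(n) = conj(f(−n)), and identity δ₀. Let ℓ₀ ∈ ℓ¹(ℤ) be defined by ℓ₀(0) = 1, ℓ₀(1) = 1, ℓ₀(n) = 0 otherwise, and for λ ∈ ℂ with |λ| ≤ 1 let ω_λ be the functional ω_λ(f) = f(0) + λ f(1). Then ω_λ(ℓ₀* ⋆ ℓ₀) = 2 + λ. In particular, if λ is not real, then ω_λ is a continuous linear functional attaining its norm at the identity but is not positive. -/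
open scoped ComplexOrder

theorem tsum_conj_neg_mul_sub_eq_sum {G : Type*} [AddCommGroup G] {f : G → ℂ} {s : Finset G}
    (hf : ∀ m ∉ s, f m = 0) (n : G) :
    ∑' m, starRingEnd ℂ (f (-m)) * f (n - m) = ∑ m ∈ s, starRingEnd ℂ (f m) * f (n + m) := by
  rw [← (Equiv.neg G).tsum_eq]
  simp only [Equiv.neg_apply, neg_neg, sub_neg_eq_add]
  exact tsum_eq_sum fun m hm => by simp [hf m hm]

theorem stmt6_general (lam : ℂ)
    (l₀ : ℤ → ℂ) (hl₀ : l₀ = fun n => if n = 0 ∨ n = 1 then 1 else 0)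
    (c : ℤ → ℂ)
    (hc : c = fun n => ∑' m : ℤ, (starRingEnd ℂ) (l₀ (-m)) * l₀ (n - m)) :
    c 0 + lam * c 1 = 2 + lam ∧ (lam.im ≠ 0 → ¬ (0 : ℂ) ≤ 2 + lam) := by
  have hsupp : ∀ m ∉ ({0, 1} : Finset ℤ), l₀ m = 0 := fun m hm => by
    simp_all
  have hc' (n : ℤ) : c n = ∑ m ∈ {0, 1}, starRingEnd ℂ (l₀ m) * l₀ (n + m) := by
    rw [hc]
    exact tsum_conj_neg_mul_sub_eq_sum hsupp n
  have hc₀ : c 0 = 2 := by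
    rw [hc', hl₀]; norm_num
  have hc₁ : c 1 = 1 := by
    rw [hc', hl₀]; norm_num
  refine ⟨by rw [hc₀, hc₁]; ring, fun him hpos => him ?_⟩
  simpa using (Complex.nonneg_iff.mp hpos).2.symm

/-- In `ℓ¹(ℤ)` with convolution and involution `f*(n) = conj (f (-n))`, for
`ℓ₀ = δ₀ + δ₁` and `ω_λ(f) = f 0 + λ f 1` one has `ω_λ(ℓ₀* ⋆ ℓ₀) = 2 + λ`;
in particular `ω_λ` is not positive when `λ` is not real. -/
theorem stmt6 (lam : ℂ) (hlam : ‖lam‖ ≤ 1)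
    (l₀ : ℤ → ℂ) (hl₀ : l₀ = fun n => if n = 0 ∨ n = 1 then 1 else 0)
    (c : ℤ → ℂ)
    (hc : c = fun n => ∑' m : ℤ, (starRingEnd ℂ) (l₀ (-m)) * l₀ (n - m)) :
    c 0 + lam * c 1 = 2 + lam ∧ (lam.im ≠ 0 → ¬ (0 : ℂ) ≤ 2 + lam) :=
  stmt6_general lam l₀ hl₀ c hc
end

section
/- Let A be a unital Banach *-algebra with continuous involution and identity 1 of norm one. Suppose that for every continuous linear functional ω with ‖ω‖ = ω(1) and every self-adjoint a ∈ A, the value ω(a²) is real. Then for every continuous linear functional ω with ‖ω‖ = ω(1) and every self-adjoint a ∈ A, the value ω(a) is real. -/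
/-- If for every norm-attaining-at-1 functional `ω` and self-adjoint `a` the
value `ω(a²)` is real, then `ω(a)` is real for all such `ω` and self-adjoint `a`. -/
theorem stmt12 {A : Type*} [NormedRing A] [NormedAlgebra ℂ A] [CompleteSpace A]
    [StarRing A] (hcont : Continuous (star : A → A)) (hone : ‖(1 : A)‖ = 1)
    (h : ∀ ω : A →L[ℂ] ℂ, (‖ω‖ : ℂ) = ω 1 →
      ∀ a : A, star a = a → (ω (a ^ 2)).im = 0) :
    ∀ ω : A →L[ℂ] ℂ, (‖ω‖ : ℂ) = ω 1 →
      ∀ a : A, star a = a → (ω a).im = 0 := by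
  intro ω hω a ha
  have h1 : star (1 + a) = 1 + a := by simp [ha]
  have h2 := h ω hω (1 + a) h1
  have h3 := h ω hω a ha
  have hexp : (1 + a) ^ 2 = 1 + (a + a + a ^ 2) := by noncomm_ring
  rw [hexp, map_add, map_add, map_add] at h2
  have hone' : (ω 1).im = 0 := by
    rw [← hω]; simp
  simp only [Complex.add_im] at h2
  linarith
end
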